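/- Let f : ℝ^d → ℝ be continuously differentiable such that f(x) ≥ ξ > 0, |f(x) - f(y)| ≤ γ‖x - y‖₂ and ‖∇f(x) - ∇f(y)‖₂ ≤ γ‖x - y‖₂ for all x, y ∈ ℝ^d. Fix σ ∈ (0,1] and for t ∈ [0,1] define b(x,t) = E_{Z∼N(0,I_d)}[∇f(x + √((1-t)σ) Z)] / E_{Z∼N(0,I_d)}[f(x + √((1-t)σ) Z)]. Then for all x, y ∈ ℝ^d and all t ∈ [0,1], ‖b(x,t) - b(y,t)‖₂ ≤ (γ/ξ + γ²/ξ²) · ‖x - y‖₂. -/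

import Mathlib

open MeasureTheory Real Filter Set

/-- The standard Gaussian measure `N(0, I_d)` on `ℝ^d`, defined through its density
with respect to Lebesgue measure. -/
noncomputable def stdGaussian (d : ℕ) : Measure (EuclideanSpace ℝ (Fin d)) :=
  volume.withDensity fun z =>
    ENNReal.ofReal ((2 * π) ^ (-(d : ℝ) / 2) * Real.exp (-‖z‖ ^ 2 / 2))

variable {d : ℕ}

lemma myint {b : ℝ} (hb : 0 < b) :
    Integrable (fun v : EuclideanSpace ℝ (Fin d) => rexp (-b * ‖v‖^2)) := by
  have h := (GaussianFourier.integrable_cexp_neg_mul_sq_norm_add (V := EuclideanSpace ℝ (Fin d))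
    (b := (b:ℂ)) (by simpa using hb) 0 0).norm
  convert h using 2 with v
  norm_num [Complex.norm_exp]
  left
  norm_cast

lemma rho_eq (z : EuclideanSpace ℝ (Fin d)) :
    (2 * π) ^ (-(d : ℝ) / 2) * Real.exp (-‖z‖ ^ 2 / 2)
      = (2 * π) ^ (-(d : ℝ) / 2) * rexp (-(1/2) * ‖z‖^2) := by ring_nf

lemma rho_integrable : Integrable (fun z : EuclideanSpace ℝ (Fin d) =>
    (2 * π) ^ (-(d : ℝ) / 2) * Real.exp (-‖z‖ ^ 2 / 2)) := by
  simp_rw [rho_eq]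
  exact (myint (by norm_num)).const_mul _

lemma rho_cont : Continuous (fun z : EuclideanSpace ℝ (Fin d) =>
    (2 * π) ^ (-(d : ℝ) / 2) * Real.exp (-‖z‖ ^ 2 / 2)) := by
  fun_prop

lemma rho_nonneg (z : EuclideanSpace ℝ (Fin d)) :
    0 ≤ (2 * π) ^ (-(d : ℝ) / 2) * Real.exp (-‖z‖ ^ 2 / 2) := by positivity

lemma rho_integral : ∫ z : EuclideanSpace ℝ (Fin d),
    (2 * π) ^ (-(d : ℝ) / 2) * Real.exp (-‖z‖ ^ 2 / 2) = 1 := by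
  simp_rw [rho_eq]
  rw [MeasureTheory.integral_const_mul, GaussianFourier.integral_rexp_neg_mul_sq_norm (by norm_num : (0:ℝ) < 1/2)]
  have h2 : π / (1/2 : ℝ) = 2 * π := by ring
  rw [h2, finrank_euclideanSpace_fin, ← Real.rpow_add (by positivity),
    show (-(d:ℝ) / 2 + (d:ℝ) / 2) = 0 by ring, Real.rpow_zero]

instance : IsProbabilityMeasure (stdGaussian d) := by
  constructor
  rw [stdGaussian, withDensity_apply _ MeasurableSet.univ, Measure.restrict_univ,
    ← ofReal_integral_eq_lintegral_ofReal rho_integrable (ae_of_all _ rho_nonneg),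
    rho_integral, ENNReal.ofReal_one]

lemma integrable_norm_std : Integrable (fun z : EuclideanSpace ℝ (Fin d) => ‖z‖)
    (stdGaussian d) := by
  rw [stdGaussian, integrable_withDensity_iff (by fun_prop) (ae_of_all _ fun z => ENNReal.ofReal_lt_top)]
  have hbd : ∀ z : EuclideanSpace ℝ (Fin d),
      ‖‖z‖ * (ENNReal.ofReal ((2 * π) ^ (-(d : ℝ) / 2) * Real.exp (-‖z‖ ^ 2 / 2))).toReal‖
        ≤ (2 * π) ^ (-(d : ℝ) / 2) * rexp (-(1/4) * ‖z‖^2) := by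
    intro z
    rw [ENNReal.toReal_ofReal (rho_nonneg z)]
    have h1 : ‖z‖ ≤ rexp (‖z‖^2/4) := by
      have := Real.add_one_le_exp (‖z‖^2/4)
      nlinarith [sq_nonneg (‖z‖/2 - 1), Real.exp_pos (‖z‖^2/4)]
    have h2 : ‖z‖ * rexp (-‖z‖^2/2) ≤ rexp (-(1/4) * ‖z‖^2) := by
      calc ‖z‖ * rexp (-‖z‖^2/2) ≤ rexp (‖z‖^2/4) * rexp (-‖z‖^2/2) := by
            exact mul_le_mul_of_nonneg_right h1 (Real.exp_pos _).le
        _ = rexp (-(1/4) * ‖z‖^2) := by rw [← Real.exp_add]; ring_nf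
    rw [Real.norm_eq_abs, abs_of_nonneg (by positivity)]
    calc ‖z‖ * ((2 * π) ^ (-(d : ℝ) / 2) * rexp (-‖z‖ ^ 2 / 2))
        = (2 * π) ^ (-(d : ℝ) / 2) * (‖z‖ * rexp (-‖z‖ ^ 2 / 2)) := by ring
      _ ≤ (2 * π) ^ (-(d : ℝ) / 2) * rexp (-(1/4) * ‖z‖^2) := by
          exact mul_le_mul_of_nonneg_left h2 (by positivity)
  exact Integrable.mono' ((myint (by norm_num)).const_mul _)
    (by
      apply Continuous.aestronglyMeasurable
      have : Continuous (fun z : EuclideanSpace ℝ (Fin d) =>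
          (ENNReal.ofReal ((2 * π) ^ (-(d : ℝ) / 2) * Real.exp (-‖z‖ ^ 2 / 2))).toReal) := by
        simp_rw [fun z : EuclideanSpace ℝ (Fin d) => ENNReal.toReal_ofReal (rho_nonneg z)]
        exact rho_cont
      exact continuous_norm.mul this) (ae_of_all _ hbd)

/-- The Schrödinger–Föllmer drift
`b(x,t) = E[∇f(x + √((1-t)σ) Z)] / E[f(x + √((1-t)σ) Z)]`, `Z ∼ N(0, I_d)`. -/
noncomputable def driftSF {d : ℕ} (f : EuclideanSpace ℝ (Fin d) → ℝ) (σ : ℝ)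
    (x : EuclideanSpace ℝ (Fin d)) (t : ℝ) : EuclideanSpace ℝ (Fin d) :=
  (∫ z, f (x + Real.sqrt ((1 - t) * σ) • z) ∂(stdGaussian d))⁻¹ •
    ∫ z, gradient f (x + Real.sqrt ((1 - t) * σ) • z) ∂(stdGaussian d)

/-- If `f ≥ ξ > 0` and both `f` and `∇f` are `γ`-Lipschitz, then the Schrödinger–Föllmer
drift is Lipschitz in `x`: `‖b(x,t) - b(y,t)‖ ≤ (γ/ξ + γ²/ξ²) ‖x - y‖` for `t ∈ [0,1]`. -/
theorem stmt11 {d : ℕ} (f : EuclideanSpace ℝ (Fin d) → ℝ)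
    (hf : ContDiff ℝ 1 f)
    (ξ γ : ℝ) (hξ : 0 < ξ)
    (hflb : ∀ x, ξ ≤ f x)
    (hfl : ∀ x y, |f x - f y| ≤ γ * ‖x - y‖)
    (hgl : ∀ x y, ‖gradient f x - gradient f y‖ ≤ γ * ‖x - y‖)
    (σ : ℝ) (hσ : σ ∈ Set.Ioc (0:ℝ) 1) :
    ∀ x y : EuclideanSpace ℝ (Fin d), ∀ t ∈ Set.Icc (0:ℝ) 1,
      ‖driftSF f σ x t - driftSF f σ y t‖ ≤ (γ / ξ + γ ^ 2 / ξ ^ 2) * ‖x - y‖ := by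
  intro x y t ht
  by_cases hd : d = 0
  · subst hd
    haveI : Subsingleton (EuclideanSpace ℝ (Fin 0)) := ⟨fun a b => by ext i; exact i.elim0⟩
    have hxy : x = y := Subsingleton.elim x y
    simp [hxy]
  -- γ ≥ 0
  have hγ : 0 ≤ γ := by
    have hd' : 0 < d := Nat.pos_of_ne_zero hd
    have h := hfl 0 (EuclideanSpace.single ⟨0, hd'⟩ (1:ℝ))
    rw [zero_sub, norm_neg, EuclideanSpace.norm_single] at h
    simp only [norm_one, mul_one] at h
    linarith [abs_nonneg (f 0 - f (EuclideanSpace.single ⟨0, hd'⟩ (1:ℝ)))]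
  set c : ℝ := Real.sqrt ((1 - t) * σ) with hc
  -- gradient facts
  have hlip : LipschitzWith (Real.toNNReal γ) f := by
    apply LipschitzWith.of_dist_le_mul
    intro a b
    rw [Real.dist_eq, dist_eq_norm, Real.coe_toNNReal γ hγ]
    exact hfl a b
  have hgradbd : ∀ w, ‖gradient f w‖ ≤ γ := by
    intro w
    have h1 : ‖gradient f w‖ = ‖fderiv ℝ f w‖ := by
      rw [gradient]
      exact LinearIsometryEquiv.norm_map _ _
    rw [h1]
    have := norm_fderiv_le_of_lipschitz ℝ (x₀ := w) hlip
    rwa [Real.coe_toNNReal γ hγ] at this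
  have hgradcont : Continuous (gradient f) := by
    have h1 : Continuous (fderiv ℝ f) := hf.continuous_fderiv one_ne_zero
    exact (InnerProductSpace.toDual ℝ (EuclideanSpace ℝ (Fin d))).symm.continuous.comp h1
  -- integrability
  have hintf : ∀ u : EuclideanSpace ℝ (Fin d),
      Integrable (fun z => f (u + c • z)) (stdGaussian d) := by
    intro u
    apply Integrable.mono' ((integrable_const |f u|).add (integrable_norm_std.const_mul (γ * |c|)))
    · exact (hf.continuous.comp (continuous_const.add (continuous_const_smul c))).aestronglyMeasurable
    · refine ae_of_all _ fun z => ?_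
      have h1 : |f (u + c • z) - f u| ≤ γ * ‖c • z‖ := by
        have := hfl (u + c • z) u
        simpa using this
      rw [norm_smul, Real.norm_eq_abs] at h1
      rw [Real.norm_eq_abs]
      calc |f (u + c • z)| ≤ |f (u + c • z) - f u| + |f u| := by
            have := abs_sub_abs_le_abs_sub (f (u + c • z)) (f u); linarith [abs_abs (f u)]
        _ ≤ γ * (|c| * ‖z‖) + |f u| := by linarith
        _ = |f u| + γ * |c| * ‖z‖ := by ring
  have hintg : ∀ u : EuclideanSpace ℝ (Fin d),
      Integrable (fun z => gradient f (u + c • z)) (stdGaussian d) := by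
    intro u
    apply Integrable.mono' (integrable_const γ)
    · exact (hgradcont.comp (continuous_const.add (continuous_const_smul c))).aestronglyMeasurable
    · exact ae_of_all _ fun z => hgradbd _
  set F : EuclideanSpace ℝ (Fin d) → ℝ :=
    fun u => ∫ z, f (u + c • z) ∂(stdGaussian d) with hF
  set G : EuclideanSpace ℝ (Fin d) → EuclideanSpace ℝ (Fin d) :=
    fun u => ∫ z, gradient f (u + c • z) ∂(stdGaussian d) with hG
  have hF_lb : ∀ u, ξ ≤ F u := by
    intro u
    have h1 : ∫ (_ : EuclideanSpace ℝ (Fin d)), ξ ∂(stdGaussian d) = ξ := by simp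
    rw [hF, ← h1]
    exact integral_mono (integrable_const ξ) (hintf u) fun z => hflb _
  have hF_lip : |F x - F y| ≤ γ * ‖x - y‖ := by
    rw [hF]
    simp only
    rw [← integral_sub (hintf x) (hintf y), ← Real.norm_eq_abs]
    calc ‖∫ z, (f (x + c • z) - f (y + c • z)) ∂(stdGaussian d)‖
        ≤ ∫ _, γ * ‖x - y‖ ∂(stdGaussian d) := by
          apply norm_integral_le_of_norm_le (integrable_const _)
          refine ae_of_all _ fun z => ?_
          rw [Real.norm_eq_abs]
          have := hfl (x + c • z) (y + c • z)
          simpa [add_sub_add_right_eq_sub] using this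
      _ = γ * ‖x - y‖ := by simp
  have hG_lip : ‖G x - G y‖ ≤ γ * ‖x - y‖ := by
    rw [hG]
    simp only
    rw [← integral_sub (hintg x) (hintg y)]
    calc ‖∫ z, (gradient f (x + c • z) - gradient f (y + c • z)) ∂(stdGaussian d)‖
        ≤ ∫ _, γ * ‖x - y‖ ∂(stdGaussian d) := by
          apply norm_integral_le_of_norm_le (integrable_const _)
          refine ae_of_all _ fun z => ?_
          have := hgl (x + c • z) (y + c • z)
          simpa [add_sub_add_right_eq_sub] using this
      _ = γ * ‖x - y‖ := by simp
  have hG_bd : ‖G y‖ ≤ γ := by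
    rw [hG]
    calc ‖∫ z, gradient f (y + c • z) ∂(stdGaussian d)‖
        ≤ ∫ _, γ ∂(stdGaussian d) := by
          apply norm_integral_le_of_norm_le (integrable_const _)
          exact ae_of_all _ fun z => hgradbd _
      _ = γ := by simp
  have hFx : 0 < F x := lt_of_lt_of_le hξ (hF_lb x)
  have hFy : 0 < F y := lt_of_lt_of_le hξ (hF_lb y)
  have key : driftSF f σ x t - driftSF f σ y t
      = (F x)⁻¹ • (G x - G y) + ((F x)⁻¹ - (F y)⁻¹) • G y := by
    show (F x)⁻¹ • G x - (F y)⁻¹ • G y = _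
    rw [smul_sub, sub_smul]
    abel
  rw [key]
  have h1 : ‖(F x)⁻¹ • (G x - G y)‖ ≤ ξ⁻¹ * (γ * ‖x - y‖) := by
    rw [norm_smul, Real.norm_eq_abs, abs_of_pos (inv_pos.2 hFx)]
    apply mul_le_mul _ hG_lip (norm_nonneg _) (by positivity)
    exact inv_anti₀ hξ (hF_lb x)
  have h2 : ‖((F x)⁻¹ - (F y)⁻¹) • G y‖ ≤ γ * ‖x - y‖ / (ξ * ξ) * γ := by
    rw [norm_smul, Real.norm_eq_abs]
    apply mul_le_mul _ hG_bd (norm_nonneg _) (by positivity)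
    rw [inv_sub_inv hFx.ne' hFy.ne', abs_div, abs_of_pos (mul_pos hFx hFy), abs_sub_comm]
    apply div_le_div₀ (by positivity) hF_lip (by positivity)
      (mul_le_mul (hF_lb x) (hF_lb y) hξ.le (lt_of_lt_of_le hξ (hF_lb x)).le)
  calc ‖(F x)⁻¹ • (G x - G y) + ((F x)⁻¹ - (F y)⁻¹) • G y‖
      ≤ ‖(F x)⁻¹ • (G x - G y)‖ + ‖((F x)⁻¹ - (F y)⁻¹) • G y‖ := norm_add_le _ _
    _ ≤ ξ⁻¹ * (γ * ‖x - y‖) + γ * ‖x - y‖ / (ξ * ξ) * γ := add_le_add h1 h2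
    _ = (γ / ξ + γ ^ 2 / ξ ^ 2) * ‖x - y‖ := by field_simp
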